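/- Let p∈U_δ(p₀). If φ(q₀(p))≠0, then the function f(q) = φ(q)/(M(p)−w_p(q)) belongs to L¹(T³) but not to L²(T³). -/

import Mathlib

open MeasureTheory Real Filter Topology

noncomputable section

/-- The 3-torus `T³ = (ℝ/2πℤ)³` is modeled as `ℝ³ = Fin 3 → ℝ`; all functions involved
are required to be `2π`-periodic in each variable. -/
abbrev 𝕋 : Type := Fin 3 → ℝ

/-- The shift by `2π` times an integer vector (a period of the torus). -/
def shift (v : Fin 3 → ℤ) : 𝕋 := fun i => 2 * Real.pi * (v i)

/-- A fundamental domain `(-π, π]³` of the torus, used as the integration domain. -/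
def box : Set 𝕋 := Set.univ.pi fun _ => Set.Ioc (-Real.pi) Real.pi

/-!
Write `g = M(p) - w_p`. Since `q0 p` is a non-degenerate maximum of the analytic function `w_p`,
the second-order Taylor expansion gives `c₁ ‖y‖² ≤ g (q0 p + y) ≤ c₂ ‖y‖²` for small `y`, and by
periodicity the same holds at every zero of `g`, these being the lattice translates of `q0 p`.
The lower bound gives `|f| ≲ ‖y‖⁻²` near each zero, which is integrable in dimension `3 > 2`;
away from the zeros `f` is continuous, so `f` is locally integrable, hence integrable on the
compact closure of the box. The upper bound and `φ (q0 p) ≠ 0` give `f² ≳ ‖y‖⁻⁴` near a translate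
`s` of `q0 p` in the closed box; as the box meets the ball of radius `u` about `s` in volume at
least `u³`, we get `∫ f² ≥ A / u` for all small `u`.
-/

open Set

lemma Matrix.vec_two_self {α : Type*} (a : α) : ![a, a] = fun _ => a := by
  funext i; fin_cases i <;> rfl

namespace ContinuousMultilinearMap

variable {E : Type*} [NormedAddCommGroup E] [NormedSpace ℝ E]
  (B : ContinuousMultilinearMap ℝ (fun _ : Fin 2 => E) ℝ)

lemma exists_pos_mul_sq_le_neg_apply_vec_two [FiniteDimensional ℝ E]
    (hB : ∀ v : E, v ≠ 0 → B ![v, v] < 0) :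
    ∃ a > 0, ∀ v : E, a * ‖v‖ ^ 2 ≤ -B ![v, v] := by
  have hhom : ∀ (t : ℝ) (v : E), -B ![t • v, t • v] = t ^ 2 * -B ![v, v] := by
    intro t v
    have := B.map_smul_univ (fun _ => t) (fun _ => v)
    simp only [Matrix.vec_two_self, smul_eq_mul, Fin.prod_univ_two] at this ⊢
    rw [this]; ring
  have hzero : B ![0, 0] = 0 := by simpa using hhom 0 0
  rcases subsingleton_or_nontrivial E with hE | hE
  · exact ⟨1, one_pos, fun v => by simp [Subsingleton.elim v 0, hzero]⟩
  have hcont : Continuous fun v : E => -B ![v, v] := by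
    simp only [Matrix.vec_two_self]; fun_prop
  obtain ⟨u₀, hu₀, hmin⟩ := (isCompact_sphere (0 : E) 1).exists_isMinOn
    (NormedSpace.sphere_nonempty.2 zero_le_one) hcont.continuousOn
  refine ⟨-B ![u₀, u₀], neg_pos.2 (hB u₀ (ne_zero_of_mem_unit_sphere ⟨u₀, hu₀⟩)), fun v => ?_⟩
  rcases eq_or_ne v 0 with rfl | hv
  · simp [hzero]
  have hv' : ‖v‖ ≠ 0 := norm_ne_zero_iff.2 hv
  have hu : ‖v‖⁻¹ • v ∈ Metric.sphere (0 : E) 1 := by simp [norm_smul, hv']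
  have hvu : v = ‖v‖ • (‖v‖⁻¹ • v) := by rw [smul_smul, mul_inv_cancel₀ hv', one_smul]
  rw [hvu, hhom, norm_smul, norm_norm, norm_smul, norm_inv, norm_norm, inv_mul_cancel₀ hv',
    mul_one, mul_comm]
  exact mul_le_mul_of_nonneg_left (hmin hu) (by positivity)

lemma abs_apply_vec_two_le (v : E) : |B ![v, v]| ≤ ‖B‖ * ‖v‖ ^ 2 := by
  simpa [Matrix.vec_two_self, sq] using B.le_opNorm ![v, v]

end ContinuousMultilinearMap

section Taylor

variable {E : Type*} [NormedAddCommGroup E] [NormedSpace ℝ E] {f : E → ℝ} {z : E}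

theorem AnalyticAt.isBigO_sub_taylor_two (hf : AnalyticAt ℝ f z) :
    (fun y => f (z + y) - (f z + fderiv ℝ f z y + iteratedFDeriv ℝ 2 f z ![y, y] / 2))
      =O[𝓝 0] fun y => ‖y‖ ^ 3 := by
  obtain ⟨p, hp⟩ := hf
  obtain ⟨r, hr⟩ := id hp
  have hsum : ∀ y, p.partialSum 3 y =
      f z + fderiv ℝ f z y + iteratedFDeriv ℝ 2 f z ![y, y] / 2 := by
    intro y
    have h0 := hr.factorial_smul y 0
    have h1 := hr.factorial_smul y 1
    have h2 := hr.factorial_smul y 2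
    norm_num [Nat.factorial, iteratedFDeriv_zero_apply, iteratedFDeriv_one_apply] at h0 h1 h2
    simp only [FormalMultilinearSeries.partialSum, Finset.sum_range_succ, Finset.sum_range_zero,
      Matrix.vec_two_self]
    rw [← h0, ← h1, ← h2]
    ring
  simpa only [hsum] using hp.isBigO_sub_partialSum_pow 3

theorem AnalyticAt.exists_sq_bounds_of_fderiv_eq_zero [FiniteDimensional ℝ E]
    (hf : AnalyticAt ℝ f z) (hd : fderiv ℝ f z = 0)
    (hH : ∀ v : E, v ≠ 0 → iteratedFDeriv ℝ 2 f z ![v, v] < 0) :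
    ∃ c₁ c₂ : ℝ, 0 < c₁ ∧ 0 < c₂ ∧ ∀ᶠ y in 𝓝 0,
      c₁ * ‖y‖ ^ 2 ≤ f z - f (z + y) ∧ f z - f (z + y) ≤ c₂ * ‖y‖ ^ 2 := by
  set B := iteratedFDeriv ℝ 2 f z
  obtain ⟨a, ha, hBa⟩ := B.exists_pos_mul_sq_le_neg_apply_vec_two hH
  have hR : (fun y => f (z + y) - (f z + B ![y, y] / 2)) =o[𝓝 0] fun y => ‖y‖ ^ 2 := by
    simpa [hd] using hf.isBigO_sub_taylor_two.trans_isLittleO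
      (Asymptotics.isLittleO_norm_pow_norm_pow (E' := E) (by norm_num : 2 < 3))
  refine ⟨a / 4, ‖B‖ / 2 + a / 4, by positivity, by positivity, ?_⟩
  filter_upwards [hR.bound (show 0 < a / 4 by positivity)] with y hy
  rw [Real.norm_eq_abs, norm_pow, norm_norm, abs_le] at hy
  have hB := abs_le.1 (B.abs_apply_vec_two_le y)
  constructor <;> linarith [hBa y]

end Taylor

section LocalIntegrability

variable {E : Type*} [NormedAddCommGroup E] [NormedSpace ℝ E] [FiniteDimensional ℝ E]
  [MeasurableSpace E] [BorelSpace E] {μ : Measure E} [μ.IsAddHaarMeasure] {g : E → ℝ}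

theorem integrableAtFilter_inv_of_sq_le (hE : 2 < Module.finrank ℝ E) (hg : Continuous g)
    {x : E} {c : ℝ} (hc : 0 < c) (hx : ∀ᶠ y in 𝓝 0, c * ‖y‖ ^ 2 ≤ g (x + y)) :
    IntegrableAtFilter (fun x => (g x)⁻¹) (𝓝 x) μ := by
  have : Nontrivial E := Module.nontrivial_of_finrank_pos (R := ℝ) (by omega)
  rw [← map_add_left_nhds_zero, ← map_add_left_eq_self μ x,
    (measurableEmbedding_addLeft x).integrableAtFilter_map_iff]
  obtain ⟨r, hr, hball⟩ := Metric.eventually_nhds_iff_ball.1 hx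
  refine ⟨Metric.ball 0 r, Metric.ball_mem_nhds 0 hr,
    integrableOn_ball_of_norm_le_rpow (C := c⁻¹) (α := 2) (by omega) (by exact_mod_cast hE) ?_
      (hg.comp (continuous_const_add x)).measurable.inv.aestronglyMeasurable⟩
  have hne : ∀ᵐ y ∂μ, y ≠ 0 := compl_mem_ae_iff.2 (measure_singleton 0)
  filter_upwards [ae_restrict_mem Metric.isOpen_ball.measurableSet, ae_restrict_of_ae hne]
    with y hy hy0
  have hpos : 0 < c * ‖y‖ ^ 2 := by positivity
  have hle := hball y hy
  rw [Function.comp_apply, Real.norm_of_nonneg (inv_nonneg.2 (hpos.le.trans hle)),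
    Real.rpow_neg (norm_nonneg y), Real.rpow_two, ← mul_inv]
  exact inv_anti₀ hpos hle

theorem locallyIntegrable_inv_of_sq_le (hE : 2 < Module.finrank ℝ E) (hg : Continuous g)
    (hzero : ∀ x, g x = 0 → ∃ c > 0, ∀ᶠ y in 𝓝 0, c * ‖y‖ ^ 2 ≤ g (x + y)) :
    LocallyIntegrable (fun x => (g x)⁻¹) μ := by
  intro x
  by_cases hx : g x = 0
  · obtain ⟨c, hc, hcx⟩ := hzero x hx
    exact integrableAtFilter_inv_of_sq_le hE hg hc hcx
  · have hopen : IsOpen {y | g y ≠ 0} := isOpen_ne_fun hg continuous_const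
    rw [← hopen.nhdsWithin_eq hx]
    exact (hg.continuousOn.inv₀ fun _ hy => hy).integrableAt_nhdsWithin hopen.measurableSet hx

end LocalIntegrability

lemma eventually_div_pow_four_le_sq_div {E : Type*} [NormedAddCommGroup E] {φ g : E → ℝ} {s : E}
    {c₁ c₂ : ℝ} (hφ : ContinuousAt φ s) (hφs : φ s ≠ 0) (hc₁ : 0 < c₁)
    (hg : ∀ᶠ y in 𝓝 0, c₁ * ‖y‖ ^ 2 ≤ g (s + y) ∧ g (s + y) ≤ c₂ * ‖y‖ ^ 2) :
    ∀ᶠ y in 𝓝[≠] 0, (φ s / (2 * c₂)) ^ 2 / ‖y‖ ^ 4 ≤ (φ (s + y) / g (s + y)) ^ 2 := by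
  have hφ_near : ∀ᶠ y in 𝓝 0, φ s ^ 2 / 4 < φ (s + y) ^ 2 := by
    have hcont : ContinuousAt (fun y => φ (s + y) ^ 2) 0 :=
      (hφ.comp_of_eq (continuous_const_add s).continuousAt (add_zero s)).pow 2
    refine hcont.eventually (lt_mem_nhds ?_)
    show φ s ^ 2 / 4 < φ (s + 0) ^ 2
    rw [add_zero]
    linarith [sq_pos_of_ne_zero hφs]
  filter_upwards [self_mem_nhdsWithin, nhdsWithin_le_nhds (hg.and hφ_near)]
    with y hy ⟨⟨hlo, hhi⟩, hφy⟩
  have hgpos : 0 < g (s + y) := lt_of_lt_of_le (by have := norm_pos_iff.2 hy; positivity) hlo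
  calc (φ s / (2 * c₂)) ^ 2 / ‖y‖ ^ 4 = φ s ^ 2 / 4 / (c₂ * ‖y‖ ^ 2) ^ 2 := by ring
    _ ≤ φ (s + y) ^ 2 / g (s + y) ^ 2 :=
      div_le_div₀ (sq_nonneg _) hφy.le (by positivity) (pow_le_pow_left₀ hgpos.le hhi 2)
    _ = (φ (s + y) / g (s + y)) ^ 2 := (div_pow _ _ _).symm

lemma shift_zero : shift 0 = 0 := by
  funext i; simp [shift]

lemma exists_shift_mem_Icc (x : 𝕋) : ∃ k : Fin 3 → ℤ, ∀ i, (x + shift k) i ∈ Icc (-π) π := by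
  choose k hk using fun i => (existsUnique_add_zsmul_mem_Ico two_pi_pos (x i) (-π)).exists
  refine ⟨k, fun i => ?_⟩
  have := hk i
  simp only [shift, Pi.add_apply, zsmul_eq_mul, mem_Ico, mem_Icc] at this ⊢
  constructor <;> linarith

lemma ofReal_le_volume_Ioc_inter_ball {a b c u : ℝ} (hc : c ∈ Icc a b)
    (hab : 2 * u ≤ b - a) : ENNReal.ofReal u ≤ volume (Ioc a b ∩ Metric.ball c u) := by
  rw [Real.ball_eq_Ioo]
  by_cases h : a + u ≤ c
  · calc ENNReal.ofReal u = volume (Ioo (c - u) c) := by simp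
      _ ≤ _ := measure_mono fun t ht => by
        simp only [mem_Ioo, mem_inter_iff, mem_Ioc] at ht ⊢
        exact ⟨⟨by linarith, by linarith [hc.2]⟩, by linarith, by linarith⟩
  · calc ENNReal.ofReal u = volume (Ioo c (c + u)) := by simp
      _ ≤ _ := measure_mono fun t ht => by
        simp only [mem_Ioo, mem_inter_iff, mem_Ioc] at ht ⊢
        exact ⟨⟨by linarith [hc.1], by linarith⟩, by linarith, by linarith⟩

lemma box_subset_pi_Icc : box ⊆ univ.pi fun _ => Icc (-π) π :=
  pi_mono fun _ _ => Ioc_subset_Icc_self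

lemma ofReal_pow_le_volume_box_inter_ball {s : 𝕋} (hs : ∀ i, s i ∈ Icc (-π) π) {u : ℝ}
    (hu : 0 < u) (huπ : u ≤ π) : ENNReal.ofReal u ^ 3 ≤ volume (box ∩ Metric.ball s u) := by
  rw [box, ball_pi s hu, ← pi_inter_distrib, volume_pi_pi]
  calc ENNReal.ofReal u ^ 3 = ∏ _i : Fin 3, ENNReal.ofReal u := by simp
    _ ≤ _ := Finset.prod_le_prod' fun i _ =>
      ofReal_le_volume_Ioc_inter_ball (hs i) (by linarith)

theorem not_memLp_two_restrict_box {f : 𝕋 → ℝ} {s : 𝕋} (hs : ∀ i, s i ∈ Icc (-π) π) {A : ℝ}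
    (hA : 0 < A) (hf : ∀ᶠ y in 𝓝[≠] 0, A / ‖y‖ ^ 4 ≤ f (s + y) ^ 2) :
    ¬ MemLp f 2 (volume.restrict box) := by
  intro hL2
  obtain ⟨ε, hε, hεf⟩ := Metric.eventually_nhds_iff_ball.1 (eventually_nhdsWithin_iff.1 hf)
  set I := ∫⁻ q in box, ‖f q ^ 2‖ₑ
  have hI : I < ⊤ := hL2.integrable_sq.hasFiniteIntegral
  have hbound : ∀ u ∈ Ioo 0 (min ε π), ENNReal.ofReal (A / u) ≤ I := by
    rintro u ⟨hu, huεπ⟩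
    set T := (box ∩ Metric.ball s u) \ {s}
    have hT : ∀ q ∈ T, ENNReal.ofReal (A / u ^ 4) ≤ ‖f q ^ 2‖ₑ := by
      rintro q ⟨⟨-, hqu⟩, hqs⟩
      rw [Metric.mem_ball, dist_eq_norm] at hqu
      have hq0 : 0 < ‖q - s‖ := norm_pos_iff.2 (sub_ne_zero.2 hqs)
      have hfq := hεf (q - s) (mem_ball_zero_iff.2 (hqu.trans (huεπ.trans_le (min_le_left _ _))))
        (sub_ne_zero.2 hqs)
      rw [add_sub_cancel] at hfq
      rw [Real.enorm_of_nonneg (sq_nonneg _)]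
      exact ENNReal.ofReal_le_ofReal <|
        (div_le_div_of_nonneg_left hA.le (by positivity) (by gcongr)).trans hfq
    calc ENNReal.ofReal (A / u) = ENNReal.ofReal (A / u ^ 4) * ENNReal.ofReal u ^ 3 := by
          rw [← ENNReal.ofReal_pow hu.le, ← ENNReal.ofReal_mul (by positivity)]
          congr 1
          field_simp
      _ ≤ ENNReal.ofReal (A / u ^ 4) * volume T := by
          rw [measure_sdiff_null (measure_singleton s)]
          gcongr
          exact ofReal_pow_le_volume_box_inter_ball hs hu (huεπ.le.trans (min_le_right _ _))
      _ = ∫⁻ _ in T, ENNReal.ofReal (A / u ^ 4) := (setLIntegral_const _ _).symm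
      _ ≤ ∫⁻ q in T, ‖f q ^ 2‖ₑ :=
          setLIntegral_mono' (((MeasurableSet.univ_pi fun _ => measurableSet_Ioc).inter
            Metric.isOpen_ball.measurableSet).diff (measurableSet_singleton s)) hT
      _ ≤ I := lintegral_mono_set (sdiff_subset.trans inter_subset_left)
  have htendsto : Tendsto (fun u => ENNReal.ofReal (A / u)) (𝓝[>] 0) (𝓝 ⊤) :=
    ENNReal.tendsto_ofReal_atTop.comp (tendsto_inv_nhdsGT_zero.const_mul_atTop hA)
  refine hI.ne (top_unique (le_of_tendsto htendsto ?_))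
  filter_upwards [Ioo_mem_nhdsGT (lt_min hε pi_pos)] using hbound

theorem statement17_general
    (φ : 𝕋 → ℝ)
    (hφa : AnalyticOnNhd ℝ φ Set.univ)
    (hφper : ∀ (x : 𝕋) (v : Fin 3 → ℤ), φ (x + shift v) = φ x)
    (w : 𝕋 → 𝕋 → ℝ)
    (hwa : AnalyticOnNhd ℝ (fun x : 𝕋 × 𝕋 => w x.1 x.2) Set.univ)
    (hwper : ∀ (p q : 𝕋) (v u : Fin 3 → ℤ), w (p + shift v) (q + shift u) = w p q)
    (p₀ : 𝕋)
    (δ : ℝ) (q0 : 𝕋 → 𝕋)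
    (hq0uniq : ∀ p ∈ Metric.ball p₀ δ, ∀ q : 𝕋, w p q = w p (q0 p) →
      ∃ v : Fin 3 → ℤ, q = q0 p + shift v)
    (hq0grad : ∀ p ∈ Metric.ball p₀ δ, fderiv ℝ (w p) (q0 p) = 0)
    (hq0hess : ∀ p ∈ Metric.ball p₀ δ, ∀ v : 𝕋, v ≠ 0 →
      iteratedFDeriv ℝ 2 (w p) (q0 p) ![v, v] < 0)
    (p : 𝕋) (hp : p ∈ Metric.ball p₀ δ) (hφ0 : φ (q0 p) ≠ 0) :
    IntegrableOn (fun q => φ q / (w p (q0 p) - w p q)) box volume ∧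
    ¬ MemLp (fun q => φ q / (w p (q0 p) - w p q)) 2 (volume.restrict box) := by
  set z := q0 p
  have hφc : Continuous φ := continuousOn_univ.1 hφa.continuousOn
  have hwc : Continuous (w p) :=
    (continuousOn_univ.1 hwa.continuousOn).comp (Continuous.prodMk_right p)
  have hper (q : 𝕋) (v : Fin 3 → ℤ) : w p (q + shift v) = w p q := by
    simpa [shift_zero] using hwper p q 0 v
  have hwz : AnalyticAt ℝ (w p) z := (hwa (p, z) trivial).comp (analyticAt_const.prod analyticAt_id)
  obtain ⟨c₁, c₂, hc₁, hc₂, hquad⟩ :=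
    hwz.exists_sq_bounds_of_fderiv_eq_zero (hq0grad p hp) (hq0hess p hp)
  have hquad_shift (v : Fin 3 → ℤ) : ∀ᶠ y in 𝓝 0, c₁ * ‖y‖ ^ 2 ≤ w p z - w p (z + shift v + y) ∧
      w p z - w p (z + shift v + y) ≤ c₂ * ‖y‖ ^ 2 := by
    simpa only [add_right_comm z, hper] using hquad
  constructor
  · have hloc : LocallyIntegrable (fun q => (w p z - w p q)⁻¹) volume := by
      refine locallyIntegrable_inv_of_sq_le (by simp) (continuous_const.sub hwc) fun x hx => ?_
      obtain ⟨v, rfl⟩ := hq0uniq p hp x (sub_eq_zero.1 hx).symm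
      exact ⟨c₁, hc₁, (hquad_shift v).mono fun _ h => h.1⟩
    simpa only [div_eq_mul_inv] using ((hloc.continuous_mul hφc).integrableOn_isCompact
      (isCompact_univ_pi fun _ => isCompact_Icc)).mono_set box_subset_pi_Icc
  · obtain ⟨k, hk⟩ := exists_shift_mem_Icc z
    refine not_memLp_two_restrict_box hk (A := (φ z / (2 * c₂)) ^ 2) (by positivity) ?_
    simpa only [hφper] using eventually_div_pow_four_le_sq_div (g := fun q => w p z - w p q)
      hφc.continuousAt (by rwa [hφper z k]) hc₁ (hquad_shift k)

/-- Let `p ∈ U_δ(p₀)`.  If `φ(q0 p) ≠ 0`, then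
`f(q) = φ(q)/(M(p) − w_p(q))` belongs to `L¹(T³)` but not to `L²(T³)`. -/
theorem statement17
    (φ : 𝕋 → ℝ)
    (hφa : AnalyticOnNhd ℝ φ Set.univ)
    (hφper : ∀ (x : 𝕋) (v : Fin 3 → ℤ), φ (x + shift v) = φ x)
    (hφnt : φ ≠ 0)
    (w : 𝕋 → 𝕋 → ℝ)
    (hwa : AnalyticOnNhd ℝ (fun x : 𝕋 × 𝕋 => w x.1 x.2) Set.univ)
    (hwper : ∀ (p q : 𝕋) (v u : Fin 3 → ℤ), w (p + shift v) (q + shift u) = w p q)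
    (p₀ q₀ : 𝕋)
    (hmax : ∀ p q : 𝕋, w p q ≤ w p₀ q₀)
    (huniq : ∀ p q : 𝕋, w p q = w p₀ q₀ →
      ∃ v u : Fin 3 → ℤ, p = p₀ + shift v ∧ q = q₀ + shift u)
    (hgrad : fderiv ℝ (fun x : 𝕋 × 𝕋 => w x.1 x.2) (p₀, q₀) = 0)
    (hhess : ∀ v : 𝕋 × 𝕋, v ≠ 0 →
      iteratedFDeriv ℝ 2 (fun x : 𝕋 × 𝕋 => w x.1 x.2) (p₀, q₀) ![v, v] < 0)
    (δ : ℝ) (hδ : 0 < δ) (q0 : 𝕋 → 𝕋)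
    (hq0a : AnalyticOnNhd ℝ q0 (Metric.ball p₀ δ))
    (hq0max : ∀ p ∈ Metric.ball p₀ δ, ∀ q : 𝕋, w p q ≤ w p (q0 p))
    (hq0uniq : ∀ p ∈ Metric.ball p₀ δ, ∀ q : 𝕋, w p q = w p (q0 p) →
      ∃ v : Fin 3 → ℤ, q = q0 p + shift v)
    (hq0grad : ∀ p ∈ Metric.ball p₀ δ, fderiv ℝ (w p) (q0 p) = 0)
    (hq0hess : ∀ p ∈ Metric.ball p₀ δ, ∀ v : 𝕋, v ≠ 0 →
      iteratedFDeriv ℝ 2 (w p) (q0 p) ![v, v] < 0)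
    (p : 𝕋) (hp : p ∈ Metric.ball p₀ δ) (hφ0 : φ (q0 p) ≠ 0) :
    IntegrableOn (fun q => φ q / (w p (q0 p) - w p q)) box volume ∧
    ¬ MemLp (fun q => φ q / (w p (q0 p) - w p q)) 2 (volume.restrict box) :=
  statement17_general φ hφa hφper w hwa hwper p₀ δ q0 hq0uniq hq0grad hq0hess p hp hφ0
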